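/- Arity reduction: for every n and every r ≤ AL(H, n), there exists an ambiguous shattered H-tree T with Rank(T) ≥ r, Depth(T) ≤ n, and every internal vertex having at most VC(Λ(H)) + 1 children. -/

import Mathlib

/-- A `Y`-lattice: a family of subsets of `Y` containing `Y` itself and closed
under binary intersections. -/
def IsYLattice {Y : Type} (L : Set (Set Y)) : Prop :=
  Set.univ ∈ L ∧ ∀ A ∈ L, ∀ B ∈ L, A ∩ B ∈ L

/-- The `Λ`-hull of `A`: the intersection of all members of `Λ` containing `A`. -/
def latHull {Y : Type} (L : Set (Set Y)) (A : Set Y) : Set Y :=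
  ⋂₀ {B | B ∈ L ∧ A ⊆ B}

/-- The `Λ`-complexity of `A`: minimal cardinality of `B ⊆ A` with `A ⊆ hull(B)`. -/
noncomputable def latComplexity {Y : Type} (L : Set (Set Y)) (A : Set Y) : ℕ :=
  sInf {n : ℕ | ∃ B : Set Y, B ⊆ A ∧ B.ncard = n ∧ A ⊆ latHull L B}

/-- The pivot dimension of `Λ`: maximal `Λ`-complexity of an element of `Λ`. -/
noncomputable def PDim {Y : Type} (L : Set (Set Y)) : ℕ :=
  sSup {n : ℕ | ∃ A ∈ L, n = latComplexity L A}

/-- `Λ` shatters `S` if every subset of `S` is a trace `S ∩ C` for some `C ∈ Λ`. -/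
def Shatters {Y : Type} (L : Set (Set Y)) (S : Set Y) : Prop :=
  ∀ B ⊆ S, ∃ C ∈ L, S ∩ C = B

/-- VC dimension of the family `Λ`. -/
noncomputable def VCdim {Y : Type} (L : Set (Set Y)) : ℕ :=
  sSup {n : ℕ | ∃ S : Set Y, Shatters L S ∧ S.ncard = n}

/-- `Λ(H)`: the minimal `Y`-lattice containing every value `h x` for `h ∈ H`. -/
def LamH {X Y : Type} (H : Set (X → Set Y)) : Set (Set Y) :=
  {A | ∀ L : Set (Set Y), IsYLattice L → (∀ h ∈ H, ∀ x : X, h x ∈ L) → A ∈ L}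

/-- A finite rooted tree: vertices, a root, and a parent map under which every
vertex reaches the root. -/
structure RTree where
  V : Type
  [fin : Fintype V]
  root : V
  parent : V → V
  parent_root : parent root = root
  reaches : ∀ v : V, ∃ k : ℕ, parent^[k] v = root

namespace RTree

/-- Children of a vertex (the root is not a child of anything). -/
def children (t : RTree) (v : t.V) : Set t.V := {w | t.parent w = v ∧ w ≠ t.root}

def IsLeaf (t : RTree) (v : t.V) : Prop := t.children v = ∅

/-- `a` is an ancestor (or equal to) `u`. -/
def Anc (t : RTree) (a u : t.V) : Prop := ∃ k : ℕ, t.parent^[k] u = a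

noncomputable def depthOf (t : RTree) (v : t.V) : ℕ := sInf {k : ℕ | t.parent^[k] v = t.root}

noncomputable def depth (t : RTree) : ℕ := sSup {n : ℕ | ∃ v : t.V, n = t.depthOf v}

end RTree

/-- An ambiguous shattered `H`-tree: internal vertices carry instances, non-root
vertices (identified with the edges to their parents) carry labels, distinct among
siblings, leaves carry hypotheses from `H` compatible with all edge labels above
them, and `E0` selects exactly one child edge of each internal vertex. -/
structure AmbTree (X Y : Type) (H : Set (X → Set Y)) where
  t : RTree
  xlab : t.V → X
  ylab : t.V → Y
  hlab : t.V → (X → Set Y)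
  E0 : Set t.V
  e0_ne_root : ∀ a ∈ E0, a ≠ t.root
  e0_unique : ∀ v : t.V, (t.children v).Nonempty → ∃! a : t.V, a ∈ t.children v ∩ E0
  sib_distinct : ∀ a b : t.V, a ≠ t.root → b ≠ t.root →
    t.parent a = t.parent b → a ≠ b → ylab a ≠ ylab b
  hlab_mem : ∀ u : t.V, t.IsLeaf u → hlab u ∈ H
  path_mem : ∀ u a : t.V, t.IsLeaf u → t.Anc a u → a ≠ t.root →
    ylab a ∈ hlab u (xlab (t.parent a))

namespace AmbTree

variable {X Y : Type} {H : Set (X → Set Y)}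

/-- Edge `a` (on the root-to-`u` path) is relevant to leaf `u`. -/
def Relevant (T : AmbTree X Y H) (a u : T.t.V) : Prop :=
  a ≠ T.t.root ∧ T.t.Anc a u ∧
    (a ∉ T.E0 ∨ ∃ b : T.t.V, T.t.parent b = T.t.parent a ∧ b ≠ T.t.root ∧
      T.ylab b ∉ T.hlab u (T.xlab (T.t.parent a)))

noncomputable def relCount (T : AmbTree X Y H) (u : T.t.V) : ℕ :=
  {a : T.t.V | T.Relevant a u}.ncard

/-- Rank: the minimum over leaves of the number of relevant edges. -/
noncomputable def rank (T : AmbTree X Y H) : ℕ :=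
  sInf {n : ℕ | ∃ u : T.t.V, T.t.IsLeaf u ∧ n = T.relCount u}

noncomputable def depth (T : AmbTree X Y H) : ℕ := T.t.depth

end AmbTree

/-!
Prune the tree. At each vertex `v`, the set `A` of child-edge labels contains a subset `B`,
minimal with `A ⊆ hull(B)`; minimality makes `B` shattered by `Λ(H)`, so `|B| ≤ VC(Λ(H))`.
Keep the `E0`-child of every vertex and the children labelled in `B`. Leaves stay leaves and
depths do not grow. A discarded sibling `b` with `y_b ∉ h_u(x_v)` can be replaced as a relevance
witness by a kept one: `h_u(x_v) ∈ Λ(H)` cannot contain all of `B`, else it would contain its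
hull and hence `y_b`.
-/

section LatticeHull

variable {Y : Type} {L : Set (Set Y)}

lemma subset_latHull (L : Set (Set Y)) (A : Set Y) : A ⊆ latHull L A :=
  fun _ hy _ hB => hB.2 hy

lemma latHull_mono (L : Set (Set Y)) {A B : Set Y} (h : A ⊆ B) : latHull L A ⊆ latHull L B :=
  fun _ hy C hC => hy C ⟨hC.1, h.trans hC.2⟩

lemma latHull_subset {A C : Set Y} (hC : C ∈ L) (h : A ⊆ C) : latHull L A ⊆ C :=
  Set.sInter_subset_of_mem ⟨hC, h⟩

lemma exists_mem_notMem_of_subset_latHull {A B S : Set Y} (hS : S ∈ L)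
    (hA : A ⊆ latHull L B) {y : Y} (hy : y ∈ A) (hyS : y ∉ S) : ∃ z ∈ B, z ∉ S := by
  by_contra! hBS
  exact hyS (latHull_subset hS hBS (hA hy))

lemma IsYLattice.latHull_mem [Finite Y] (hL : IsYLattice L) (A : Set Y) : latHull L A ∈ L := by
  have hfin : {B | B ∈ L ∧ A ⊆ B}.Finite := Set.toFinite _
  have := Finset.inf_mem L hL.1 hL.2 hfin.toFinset id fun B hB => ((hfin.mem_toFinset).1 hB).1
  rwa [Finset.inf_id_set_eq_sInter, hfin.coe_toFinset] at this

lemma Shatters.ncard_le_VCdim [Finite Y] {S : Set Y} (h : Shatters L S) : S.ncard ≤ VCdim L :=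
  le_csSup ⟨Nat.card Y, by rintro _ ⟨S', -, rfl⟩; exact Set.ncard_le_card S'⟩ ⟨S, h, rfl⟩

/-- The trace of `latHull L T` on `B` is `T`. -/
lemma IsYLattice.shatters_of_minimal [Finite Y] (hL : IsYLattice L) {A B : Set Y}
    (hB : Minimal (fun B => B ⊆ A ∧ A ⊆ latHull L B) B) : Shatters L B := by
  intro T hTB
  refine ⟨latHull L T, hL.latHull_mem T,
    subset_antisymm ?_ fun x hx => ⟨hTB hx, subset_latHull L T hx⟩⟩
  rintro x ⟨hxB, hxT⟩
  by_contra hx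
  have hTx : T ⊆ B \ {x} := fun y hy => ⟨hTB hy, by rintro rfl; exact hx hy⟩
  have hBx : B ⊆ latHull L (B \ {x}) := fun y hy => by
    by_cases hyx : y = x
    · exact hyx ▸ latHull_mono L hTx hxT
    · exact subset_latHull L _ ⟨hy, hyx⟩
  have hAx : A ⊆ latHull L (B \ {x}) := hB.1.2.trans (latHull_subset (hL.latHull_mem _) hBx)
  exact (hB.2 ⟨Set.sdiff_subset.trans hB.1.1, hAx⟩ Set.sdiff_subset hxB).2 rfl

lemma IsYLattice.exists_subset_ncard_le_VCdim [Finite Y] (hL : IsYLattice L) (A : Set Y) :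
    ∃ B ⊆ A, B.ncard ≤ VCdim L ∧ A ⊆ latHull L B := by
  obtain ⟨B, hB⟩ := (Set.toFinite {B | B ⊆ A ∧ A ⊆ latHull L B}).exists_minimal
    ⟨A, subset_rfl, subset_latHull L A⟩
  exact ⟨B, hB.1.1, (hL.shatters_of_minimal hB).ncard_le_VCdim, hB.1.2⟩

lemma isYLattice_lamH {X : Type} (H : Set (X → Set Y)) : IsYLattice (LamH H) :=
  ⟨fun _ hL _ => hL.1, fun A hA B hB L hL hH => hL.2 A (hA L hL hH) B (hB L hL hH)⟩

lemma mem_lamH {X : Type} {H : Set (X → Set Y)} {h : X → Set Y} (hh : h ∈ H) (x : X) :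
    h x ∈ LamH H :=
  fun _ _ hH => hH h hh x

end LatticeHull

attribute [instance] RTree.fin

namespace RTree

variable (t : RTree)

lemma depthOf_lt_of_mem_children {v w : t.V} (hw : w ∈ t.children v) :
    t.depthOf v < t.depthOf w := by
  have hroot : t.parent^[t.depthOf w] w = t.root := Nat.sInf_mem (t.reaches w)
  obtain ⟨k, hk⟩ : ∃ k, t.depthOf w = k + 1 :=
    Nat.exists_eq_succ_of_ne_zero fun h0 => hw.2 (by rwa [h0] at hroot)
  rw [hk, Function.iterate_succ_apply, hw.1] at hroot
  exact hk ▸ Nat.lt_succ_of_le (Nat.sInf_le hroot)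

lemma exists_isLeaf : ∃ v : t.V, t.IsLeaf v := by
  have : Nonempty t.V := ⟨t.root⟩
  obtain ⟨v, hv⟩ := Finite.exists_max t.depthOf
  exact ⟨v, Set.eq_empty_of_forall_notMem fun w hw =>
    (hv w).not_gt (t.depthOf_lt_of_mem_children hw)⟩

section Prune

variable {t} (keep : t.V → Prop)

def Survives (w : t.V) : Prop := ∀ k : ℕ, keep (t.parent^[k] w)

variable {keep}

lemma Survives.parent {w : t.V} (hw : t.Survives keep w) : t.Survives keep (t.parent w) :=
  fun k => by simpa only [Function.iterate_succ_apply] using hw (k + 1)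

lemma Survives.of_parent {w : t.V} (hk : keep w) (hp : t.Survives keep (t.parent w)) :
    t.Survives keep w
  | 0 => hk
  | k + 1 => by simpa only [Function.iterate_succ_apply] using hp k

lemma Survives.of_anc {a u : t.V} (hu : t.Survives keep u) (h : t.Anc a u) :
    t.Survives keep a := by
  obtain ⟨k, rfl⟩ := h
  intro j
  simpa only [← Function.iterate_add_apply] using hu (j + k)

variable (t keep)

lemma survives_root (hroot : keep t.root) : t.Survives keep t.root :=
  fun k => (Function.iterate_fixed t.parent_root k).symm ▸ hroot

noncomputable def prune (hroot : keep t.root) : RTree where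
  V := {w // t.Survives keep w}
  fin := Fintype.ofFinite _
  root := ⟨t.root, t.survives_root keep hroot⟩
  parent w := ⟨t.parent w, w.2.parent⟩
  parent_root := Subtype.ext t.parent_root
  reaches v := (t.reaches v.1).imp fun k hk => Subtype.ext <|
    (Function.Semiconj.iterate_right (f := Subtype.val)
      (gb := t.parent) (fun _ => rfl) k v).trans hk

variable {keep} (hroot : keep t.root)

lemma val_iterate_parent_prune (w : (t.prune keep hroot).V) (k : ℕ) :
    ((t.prune keep hroot).parent^[k] w).1 = t.parent^[k] w.1 :=
  Function.Semiconj.iterate_right (f := Subtype.val) (fun _ => rfl) k w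

lemma val_inj_prune {v w : (t.prune keep hroot).V} : v.1 = w.1 ↔ v = w :=
  Subtype.val_inj

lemma mem_children_prune {v w : (t.prune keep hroot).V} :
    w ∈ (t.prune keep hroot).children v ↔ w.1 ∈ t.children v.1 :=
  and_congr (val_inj_prune t hroot).symm (not_congr (val_inj_prune t hroot).symm)

lemma anc_prune_iff {a u : (t.prune keep hroot).V} :
    (t.prune keep hroot).Anc a u ↔ t.Anc a.1 u.1 :=
  exists_congr fun k => by rw [← val_inj_prune, val_iterate_parent_prune]

lemma depthOf_prune (v : (t.prune keep hroot).V) :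
    (t.prune keep hroot).depthOf v = t.depthOf v.1 :=
  congrArg sInf <| Set.ext fun k => by
    change _ = _ ↔ _ = _
    rw [← val_inj_prune, val_iterate_parent_prune]
    rfl

lemma depth_prune_le : (t.prune keep hroot).depth ≤ t.depth := by
  refine csSup_le ⟨_, (t.prune keep hroot).root, rfl⟩ ?_
  rintro _ ⟨v, rfl⟩
  rw [depthOf_prune]
  have hbdd : BddAbove {n | ∃ v : t.V, n = t.depthOf v} :=
    ⟨Finset.univ.sup t.depthOf, by rintro _ ⟨w, rfl⟩; exact Finset.le_sup (Finset.mem_univ w)⟩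
  exact le_csSup hbdd ⟨v.1, rfl⟩

end Prune

end RTree

namespace AmbTree

variable {X Y : Type} {H : Set (X → Set Y)} (T : AmbTree X Y H)

lemma injOn_ylab_children (v : T.t.V) : Set.InjOn T.ylab (T.t.children v) :=
  fun a ha b hb hab => by_contra fun hne =>
    T.sib_distinct a b ha.2 hb.2 (ha.1.trans hb.1.symm) hne hab

lemma ncard_children_ylab_mem_le [Finite Y] (B : T.t.V → Set Y) (v : T.t.V) :
    {w ∈ T.t.children v | T.ylab w ∈ B (T.t.parent w)}.ncard ≤ (B v).ncard :=
  Set.ncard_le_ncard_of_injOn T.ylab (fun _ hw => hw.1.1 ▸ hw.2)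
    ((T.injOn_ylab_children v).mono fun _ hw => hw.1)

lemma ncard_children_inter_E0_le_one (v : T.t.V) : (T.t.children v ∩ T.E0).ncard ≤ 1 :=
  (Set.ncard_le_one_iff (Set.toFinite _)).2 fun hb hc => (T.e0_unique v ⟨_, hb.1⟩).unique hb hc

section Prune

variable (keep : T.t.V → Prop)

def Kept (w : T.t.V) : Prop := w = T.t.root ∨ w ∈ T.E0 ∨ keep w

lemma kept_root : T.Kept keep T.t.root := Or.inl rfl

variable {T keep}

lemma isLeaf_of_isLeaf_prune {u : (T.t.prune (T.Kept keep) (T.kept_root keep)).V}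
    (hu : (T.t.prune (T.Kept keep) (T.kept_root keep)).IsLeaf u) : T.t.IsLeaf u.1 := by
  refine Set.not_nonempty_iff_eq_empty.1 fun h => ?_
  obtain ⟨a, ⟨hau, haE⟩, -⟩ := T.e0_unique u.1 h
  have ha : T.t.Survives (T.Kept keep) a := .of_parent (Or.inr (Or.inl haE)) (hau.1 ▸ u.2)
  exact hu.subset ((T.t.mem_children_prune (T.kept_root keep)).2 hau : ⟨a, ha⟩ ∈ _)

variable (T keep)

noncomputable def prune : AmbTree X Y H where
  t := T.t.prune (T.Kept keep) (T.kept_root keep)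
  xlab w := T.xlab w.1
  ylab w := T.ylab w.1
  hlab w := T.hlab w.1
  E0 := {w | w.1 ∈ T.E0}
  e0_ne_root a ha h := T.e0_ne_root a.1 ha (congrArg Subtype.val h)
  e0_unique v := by
    rintro ⟨w, hw⟩
    obtain ⟨a, ⟨hav, haE⟩, huniq⟩ := T.e0_unique v.1 ⟨w.1, (T.t.mem_children_prune (T.kept_root keep)).1 hw⟩
    refine ⟨⟨a, .of_parent (Or.inr (Or.inl haE)) (hav.1 ▸ v.2)⟩,
      ⟨(T.t.mem_children_prune (T.kept_root keep)).2 hav, haE⟩, fun b hb => ?_⟩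
    exact Subtype.ext (huniq b.1 ⟨(T.t.mem_children_prune (T.kept_root keep)).1 hb.1, hb.2⟩)
  sib_distinct a b ha hb hab hne := T.sib_distinct a.1 b.1
    (fun h => ha (Subtype.ext h)) (fun h => hb (Subtype.ext h)) (congrArg Subtype.val hab)
    (fun h => hne (Subtype.ext h))
  hlab_mem u hu := T.hlab_mem u.1 (isLeaf_of_isLeaf_prune hu)
  path_mem u a hu hau ha := T.path_mem u.1 a.1 (isLeaf_of_isLeaf_prune hu)
    ((T.t.anc_prune_iff (T.kept_root keep)).1 hau) (fun h => ha (Subtype.ext h))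

lemma depth_prune_le : (T.prune keep).depth ≤ T.depth :=
  T.t.depth_prune_le (T.kept_root keep)

def KeepsWitnesses : Prop :=
  ∀ v, ∀ h ∈ H, ∀ b ∈ T.t.children v, T.ylab b ∉ h (T.xlab v) →
    ∃ c ∈ T.t.children v, keep c ∧ T.ylab c ∉ h (T.xlab v)

variable {T keep}

lemma KeepsWitnesses.relevant_prune (hkeep : T.KeepsWitnesses keep)
    {a u : (T.prune keep).t.V} (hu : (T.prune keep).t.IsLeaf u) (ha : T.Relevant a.1 u.1) :
    (T.prune keep).Relevant a u := by
  obtain ⟨haroot, hanc, hrel⟩ := ha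
  refine ⟨fun h => haroot (congrArg Subtype.val h), (T.t.anc_prune_iff (T.kept_root keep)).2 hanc,
    hrel.imp id ?_⟩
  rintro ⟨b, hba, hbroot, hbS⟩
  obtain ⟨c, hc, hck, hcS⟩ :=
    hkeep _ _ (T.hlab_mem u.1 (isLeaf_of_isLeaf_prune hu)) b ⟨hba, hbroot⟩ hbS
  have hcs : T.t.Survives (T.Kept keep) c := .of_parent (Or.inr (Or.inr hck)) (hc.1 ▸ a.2.parent)
  exact ⟨⟨c, hcs⟩, Subtype.ext hc.1, fun h => hc.2 (congrArg Subtype.val h), hcS⟩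

lemma KeepsWitnesses.relCount_le_relCount_prune (hkeep : T.KeepsWitnesses keep)
    {u : (T.prune keep).t.V} (hu : (T.prune keep).t.IsLeaf u) :
    T.relCount u.1 ≤ (T.prune keep).relCount u := by
  have hsub : {a | T.Relevant a u.1} ⊆ Subtype.val '' {a | (T.prune keep).Relevant a u} :=
    fun a ha => ⟨⟨a, u.2.of_anc ha.2.1⟩, hkeep.relevant_prune hu ha, rfl⟩
  exact (Set.ncard_le_ncard hsub).trans (Set.ncard_image_of_injective _ Subtype.val_injective).le

lemma KeepsWitnesses.rank_le_rank_prune (hkeep : T.KeepsWitnesses keep) :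
    T.rank ≤ (T.prune keep).rank := by
  obtain ⟨u₀, hu₀⟩ := (T.prune keep).t.exists_isLeaf
  refine le_csInf ⟨_, u₀, hu₀, rfl⟩ ?_
  rintro _ ⟨u, hu, rfl⟩
  calc T.rank ≤ T.relCount u.1 := Nat.sInf_le ⟨u.1, isLeaf_of_isLeaf_prune hu, rfl⟩
    _ ≤ _ := hkeep.relCount_le_relCount_prune hu

variable (T keep)

lemma ncard_children_prune_le (v : (T.prune keep).t.V) :
    ((T.prune keep).t.children v).ncard ≤ {w ∈ T.t.children v.1 | keep w}.ncard + 1 := by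
  have hsub : Subtype.val '' (T.prune keep).t.children v ⊆
      {w ∈ T.t.children v.1 | keep w} ∪ (T.t.children v.1 ∩ T.E0) := by
    rintro _ ⟨w, hw, rfl⟩
    have hwv := (T.t.mem_children_prune (T.kept_root keep)).1 hw
    rcases w.2 0 with hroot | hE0 | hkeep
    · exact absurd hroot hwv.2
    · exact Or.inr ⟨hwv, hE0⟩
    · exact Or.inl ⟨hwv, hkeep⟩
  calc _ = (Subtype.val '' (T.prune keep).t.children v).ncard :=
        (Set.ncard_image_of_injective _ Subtype.val_injective).symm
    _ ≤ _ := Set.ncard_le_ncard hsub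
    _ ≤ _ := Set.ncard_union_le _ _
    _ ≤ _ := Nat.add_le_add_left (T.ncard_children_inter_E0_le_one v.1) _

end Prune

lemma keepsWitnesses_of_subset_latHull {B : T.t.V → Set Y}
    (hBsub : ∀ v, B v ⊆ T.ylab '' T.t.children v)
    (hBhull : ∀ v, T.ylab '' T.t.children v ⊆ latHull (LamH H) (B v)) :
    T.KeepsWitnesses fun w => T.ylab w ∈ B (T.t.parent w) := by
  intro v h hh b hb hbS
  obtain ⟨y, hyB, hyS⟩ :=
    exists_mem_notMem_of_subset_latHull (mem_lamH hh _) (hBhull v) ⟨b, hb, rfl⟩ hbS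
  obtain ⟨c, hc, rfl⟩ := hBsub v hyB
  exact ⟨c, hc, show T.ylab c ∈ B (T.t.parent c) from hc.1 ▸ hyB, hyS⟩

end AmbTree

/-- arity reduction: for every `n` and `r`, if some ambiguous
shattered `H`-tree of depth at most `n` has rank at least `r`, then there is such a
tree in which moreover every vertex has at most `VC(Λ(H)) + 1` children. -/
theorem arity_reduction {X Y : Type} [Fintype Y] (H : Set (X → Set Y)) (n r : ℕ)
    (h : ∃ T : AmbTree X Y H, T.depth ≤ n ∧ r ≤ T.rank) :
    ∃ T : AmbTree X Y H, T.depth ≤ n ∧ r ≤ T.rank ∧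
      ∀ v : T.t.V, (T.t.children v).ncard ≤ VCdim (LamH H) + 1 := by
  obtain ⟨T, hdepth, hrank⟩ := h
  choose B hBsub hBcard hBhull using fun v : T.t.V =>
    (isYLattice_lamH H).exists_subset_ncard_le_VCdim (T.ylab '' T.t.children v)
  let keep w := T.ylab w ∈ B (T.t.parent w)
  have hkeep : T.KeepsWitnesses keep := T.keepsWitnesses_of_subset_latHull hBsub hBhull
  refine ⟨T.prune keep, (T.depth_prune_le keep).trans hdepth,
    hrank.trans hkeep.rank_le_rank_prune, fun v => ?_⟩
  calc _ ≤ _ := T.ncard_children_prune_le keep v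
    _ ≤ VCdim (LamH H) + 1 := by
      gcongr
      exact (T.ncard_children_ylab_mem_le B v.1).trans (hBcard v.1)
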